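/- Fix real parameters α, β ≥ 0 and a > 0. Let z = (z₁,…,z₇) : ℝ × ℝ → ℝ⁷ be smooth with z₄ nowhere zero, and suppose z satisfies M z_t + K(z) z_x = ∇H(z), where, writing z = (l,u,π,Δ,Θ,Ξ,Π): M is the antisymmetric 7×7 matrix with M₁₃ = 1, M₃₁ = −1 and all other entries zero; K(z) is the antisymmetric 7×7 matrix with upper-triangular nonzero entries K₁₂ = π, K₁₃ = u, K₁₄ = (a/2)Π/Δ², K₁₇ = −a/(2Δ), K₂₄ = −(a/2)Ξ/Δ², K₂₅ = β, K₂₆ = a/(2Δ), K₄₅ = a/(2Δ) (and K_{ji} = −K_{ij}, all other entries zero); and H(z) = (α/2)u² − (β/2)Θ² − (a/2)ΘΞ/Δ + (a/2)Π. Then l := z₁, u := z₂, π := z₃ satisfy the Clebsch system: (i) αu − β u_xx = −π l_x + (a/2) ∂_x(l_xx/l_x); (ii) l_t + u l_x = 0; (iii) π_t + ∂_x(π u − (a/2) u_xx/l_x) = 0. -/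

import Mathlib

/-- Partial derivative in the first (spatial) variable. -/
noncomputable def px (f : ℝ → ℝ → ℝ) : ℝ → ℝ → ℝ := fun x t => deriv (fun y => f y t) x

/-- Partial derivative in the second (time) variable. -/
noncomputable def pt (f : ℝ → ℝ → ℝ) : ℝ → ℝ → ℝ := fun x t => deriv (fun s => f x s) t

/-- The Euclidean gradient of `H : ℝⁿ → ℝ` (vector of partial derivatives). -/
noncomputable def gradH {n : ℕ} (H : (Fin n → ℝ) → ℝ) (w : Fin n → ℝ) : Fin n → ℝ :=
  fun i => deriv (fun s => H (Function.update w i s)) (w i)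

/-- The constant antisymmetric matrix `M` with `M₁₃ = 1`, `M₃₁ = −1`. -/
def Mmat7 : Matrix (Fin 7) (Fin 7) ℝ :=
  !![0, 0, 1, 0, 0, 0, 0;
     0, 0, 0, 0, 0, 0, 0;
     -1, 0, 0, 0, 0, 0, 0;
     0, 0, 0, 0, 0, 0, 0;
     0, 0, 0, 0, 0, 0, 0;
     0, 0, 0, 0, 0, 0, 0;
     0, 0, 0, 0, 0, 0, 0]

/-- The antisymmetric matrix `K(z)` of the multisymplectic formulation, with
`z = (l, u, π, Δ, Θ, Ξ, Π)` given as `w 0, …, w 6`. -/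
noncomputable def Kmat7 (a β : ℝ) (w : Fin 7 → ℝ) : Matrix (Fin 7) (Fin 7) ℝ :=
  !![0, w 2, w 1, a / 2 * w 6 / (w 3) ^ 2, 0, 0, -(a / (2 * w 3));
     -(w 2), 0, 0, -(a / 2 * w 5 / (w 3) ^ 2), β, a / (2 * w 3), 0;
     -(w 1), 0, 0, 0, 0, 0, 0;
     -(a / 2 * w 6 / (w 3) ^ 2), a / 2 * w 5 / (w 3) ^ 2, 0, 0, a / (2 * w 3), 0, 0;
     0, -β, 0, -(a / (2 * w 3)), 0, 0, 0;
     0, -(a / (2 * w 3)), 0, 0, 0, 0, 0;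
     a / (2 * w 3), 0, 0, 0, 0, 0, 0]

/-- The Hamiltonian `H(z) = (α/2)u² − (β/2)Θ² − (a/2)ΘΞ/Δ + (a/2)Π`. -/
noncomputable def Ham7 (α β a : ℝ) (w : Fin 7 → ℝ) : ℝ :=
  α / 2 * (w 1) ^ 2 - β / 2 * (w 4) ^ 2 - a / 2 * (w 4 * w 5 / w 3) + a / 2 * w 6

lemma gradH_Ham7_0 (α β a : ℝ) (w : Fin 7 → ℝ) (hw : w 3 ≠ 0) :
    gradH (Ham7 α β a) w 0 = 0 := by
    have h : (fun s => Ham7 α β a (Function.update w 0 s)) = fun _ => Ham7 α β a w := by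
      funext s; simp [Ham7, Function.update_apply]
    rw [gradH, h, deriv_const]
lemma gradH_Ham7_1 (α β a : ℝ) (w : Fin 7 → ℝ) (hw : w 3 ≠ 0) :
    gradH (Ham7 α β a) w 1 = α * w 1 := by
    have h : (fun s => Ham7 α β a (Function.update w 1 s)) =
        fun s => α / 2 * s ^ 2 - β / 2 * (w 4) ^ 2 - a / 2 * (w 4 * w 5 / w 3) + a / 2 * w 6 := by
      funext s; simp [Ham7, Function.update_apply]
    have hd : HasDerivAt (fun s : ℝ => α / 2 * s ^ 2 - β / 2 * (w 4) ^ 2 - a / 2 * (w 4 * w 5 / w 3) + a / 2 * w 6)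
        (α / 2 * (2 * w 1 ^ 1)) (w 1) :=
      ((((hasDerivAt_pow 2 (w 1)).const_mul (α / 2)).sub_const _).sub_const _).add_const _
    rw [gradH, h, hd.deriv]; ring
lemma gradH_Ham7_2 (α β a : ℝ) (w : Fin 7 → ℝ) (hw : w 3 ≠ 0) :
    gradH (Ham7 α β a) w 2 = 0 := by
    have h : (fun s => Ham7 α β a (Function.update w 2 s)) = fun _ => Ham7 α β a w := by
      funext s; simp [Ham7, Function.update_apply]
    rw [gradH, h, deriv_const]
lemma gradH_Ham7_3 (α β a : ℝ) (w : Fin 7 → ℝ) (hw : w 3 ≠ 0) :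
    gradH (Ham7 α β a) w 3 = a / 2 * (w 4 * w 5) / (w 3) ^ 2 := by
    have h : (fun s => Ham7 α β a (Function.update w 3 s)) =
        fun s => α / 2 * (w 1) ^ 2 - β / 2 * (w 4) ^ 2 - a / 2 * (w 4 * w 5 * s⁻¹) + a / 2 * w 6 := by
      funext s; simp [Ham7, Function.update_apply]; left; rw [div_eq_mul_inv]
    have hd : HasDerivAt (fun s : ℝ => α / 2 * (w 1) ^ 2 - β / 2 * (w 4) ^ 2 - a / 2 * (w 4 * w 5 * s⁻¹) + a / 2 * w 6)
        (-(a / 2 * (w 4 * w 5 * -(w 3 ^ 2)⁻¹))) (w 3) :=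
      ((((hasDerivAt_inv hw).const_mul (w 4 * w 5)).const_mul (a/2)).const_sub _).add_const _
    rw [gradH, h, hd.deriv]; field_simp
lemma gradH_Ham7_4 (α β a : ℝ) (w : Fin 7 → ℝ) (hw : w 3 ≠ 0) :
    gradH (Ham7 α β a) w 4 = -(β * w 4) - a / 2 * w 5 / w 3 := by
    have h : (fun s => Ham7 α β a (Function.update w 4 s)) =
        fun s => α / 2 * (w 1) ^ 2 - (β / 2 * s ^ 2 + a / 2 * (w 5 / w 3) * s) + a / 2 * w 6 := by
      funext s; simp [Ham7, Function.update_apply]; ring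
    have hd : HasDerivAt (fun s : ℝ => α / 2 * (w 1) ^ 2 - (β / 2 * s ^ 2 + a / 2 * (w 5 / w 3) * s) + a / 2 * w 6)
        (-(β / 2 * (2 * w 4 ^ 1) + a / 2 * (w 5 / w 3) * 1)) (w 4) :=
      ((((hasDerivAt_pow 2 (w 4)).const_mul (β / 2)).add ((hasDerivAt_id (w 4)).const_mul _)).const_sub _).add_const _
    rw [gradH, h, hd.deriv]; field_simp; ring
lemma gradH_Ham7_5 (α β a : ℝ) (w : Fin 7 → ℝ) (hw : w 3 ≠ 0) :
    gradH (Ham7 α β a) w 5 = -(a / 2 * w 4 / w 3) := by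
    have h : (fun s => Ham7 α β a (Function.update w 5 s)) =
        fun s => α / 2 * (w 1) ^ 2 - β / 2 * (w 4) ^ 2 - a / 2 * (w 4 / w 3) * s + a / 2 * w 6 := by
      funext s; simp [Ham7, Function.update_apply]; ring
    have hd : HasDerivAt (fun s : ℝ => α / 2 * (w 1) ^ 2 - β / 2 * (w 4) ^ 2 - a / 2 * (w 4 / w 3) * s + a / 2 * w 6)
        (-(a / 2 * (w 4 / w 3) * 1)) (w 5) := by
      have := (((hasDerivAt_id (w 5)).const_mul (a / 2 * (w 4 / w 3))).const_sub (α / 2 * (w 1) ^ 2 - β / 2 * (w 4) ^ 2)).add_const (a / 2 * w 6)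
      simpa [sub_sub] using this
    rw [gradH, h, hd.deriv]; field_simp
lemma gradH_Ham7_6 (α β a : ℝ) (w : Fin 7 → ℝ) (hw : w 3 ≠ 0) :
    gradH (Ham7 α β a) w 6 = a / 2 := by
    have h : (fun s => Ham7 α β a (Function.update w 6 s)) =
        fun s => α / 2 * (w 1) ^ 2 - β / 2 * (w 4) ^ 2 - a / 2 * (w 4 * w 5 / w 3) + a / 2 * s := by
      funext s; simp [Ham7, Function.update_apply]
    have hd : HasDerivAt (fun s : ℝ => α / 2 * (w 1) ^ 2 - β / 2 * (w 4) ^ 2 - a / 2 * (w 4 * w 5 / w 3) + a / 2 * s)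
        (a / 2 * 1) (w 6) :=
      ((hasDerivAt_id (w 6)).const_mul (a / 2)).const_add _
    rw [gradH, h, hd.deriv]; ring
  

lemma vec7_five {A : Type*} (a b c d e f g : A) : ![a,b,c,d,e,f,g] 5 = f := rfl
lemma vec7_six {A : Type*} (a b c d e f g : A) : ![a,b,c,d,e,f,g] 6 = g := rfl

/-- Converse direction of Theorem 3.1: if `z` solves the multisymplectic Hamiltonian system
`M z_t + K(z) z_x = ∇H(z)` (with `z₄` nowhere zero), then `l := z₁`, `u := z₂`, `π := z₃`
solve the Clebsch system (i)–(iii). -/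
theorem stmt9 (α β a : ℝ) (hα : 0 ≤ α) (hβ : 0 ≤ β) (ha : 0 < a)
    (z : ℝ → ℝ → Fin 7 → ℝ)
    (hz : ContDiff ℝ (⊤ : ℕ∞) (fun p : ℝ × ℝ => z p.1 p.2))
    (hΔ : ∀ x t : ℝ, z x t 3 ≠ 0)
    (heq : ∀ x t : ℝ,
      Mmat7.mulVec (fun i => pt (fun x t => z x t i) x t)
        + (Kmat7 a β (z x t)).mulVec (fun i => px (fun x t => z x t i) x t)
      = gradH (Ham7 α β a) (z x t)) :
    (∀ x t : ℝ, α * (z x t 1) - β * px (px (fun x t => z x t 1)) x t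
        = -(z x t 2) * px (fun x t => z x t 0) x t
          + (a / 2) * px (fun x t =>
              px (px (fun x t => z x t 0)) x t / px (fun x t => z x t 0) x t) x t)
    ∧ (∀ x t : ℝ, pt (fun x t => z x t 0) x t
        + z x t 1 * px (fun x t => z x t 0) x t = 0)
    ∧ (∀ x t : ℝ, pt (fun x t => z x t 2) x t
        + px (fun x t => z x t 2 * z x t 1
            - (a / 2) * px (px (fun x t => z x t 1)) x t / px (fun x t => z x t 0) x t) x t
        = 0) := by
  have hdi : ∀ (i : Fin 7) (t x : ℝ), DifferentiableAt ℝ (fun y => z y t i) x := by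
    intro i t x
    have h1 : ContDiff ℝ (⊤ : ℕ∞) (fun p : ℝ × ℝ => z p.1 p.2 i) := contDiff_pi.mp hz i
    have h2 : ContDiff ℝ (⊤ : ℕ∞) (fun y : ℝ => ((y, t) : ℝ × ℝ)) := contDiff_id.prodMk contDiff_const
    exact ((h1.comp h2).differentiable (by simp)).differentiableAt
  -- scalar equations
  have E2 : ∀ x t : ℝ, pt (fun x t => z x t 0) x t + z x t 1 * px (fun x t => z x t 0) x t = 0 := by
    intro x t
    have h := congrFun (heq x t) 2
    rw [gradH_Ham7_2 α β a (z x t) (hΔ x t)] at h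
    simp [Mmat7, Kmat7, Matrix.mulVec, dotProduct, Fin.sum_univ_seven, vec7_five, vec7_six] at h
    linarith
  have SIMP : True := trivial
  have E6 : ∀ x t : ℝ, px (fun x t => z x t 0) x t = z x t 3 := by
    intro x t
    have h := congrFun (heq x t) 6
    rw [gradH_Ham7_6 α β a (z x t) (hΔ x t)] at h
    simp [Mmat7, Kmat7, Matrix.mulVec, dotProduct, Fin.sum_univ_seven, vec7_five, vec7_six] at h
    have hne := hΔ x t
    field_simp at h
    have h2 : a * (2 * px (fun x t => z x t 0) x t) = a * (2 * z x t 3) := by rw [h]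
    have := mul_left_cancel₀ (ne_of_gt ha) h2
    linarith
  have E5 : ∀ x t : ℝ, px (fun x t => z x t 1) x t = z x t 4 := by
    intro x t
    have h := congrFun (heq x t) 5
    rw [gradH_Ham7_5 α β a (z x t) (hΔ x t)] at h
    simp [Mmat7, Kmat7, Matrix.mulVec, dotProduct, Fin.sum_univ_seven, vec7_five, vec7_six] at h
    have hne := hΔ x t
    field_simp at h
    exact h
  have E4 : ∀ x t : ℝ, px (fun x t => z x t 3) x t = z x t 5 := by
    intro x t
    have h := congrFun (heq x t) 4
    rw [gradH_Ham7_4 α β a (z x t) (hΔ x t)] at h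
    simp [Mmat7, Kmat7, Matrix.mulVec, dotProduct, Fin.sum_univ_seven, vec7_five, vec7_six] at h
    rw [E5 x t] at h
    have hne := hΔ x t
    field_simp at h
    have h2 : a * px (fun x t => z x t 3) x t = a * z x t 5 := by linarith
    exact mul_left_cancel₀ (ne_of_gt ha) h2
  have E3 : ∀ x t : ℝ, px (fun x t => z x t 4) x t = z x t 6 := by
    intro x t
    have h := congrFun (heq x t) 3
    rw [gradH_Ham7_3 α β a (z x t) (hΔ x t)] at h
    simp [Mmat7, Kmat7, Matrix.mulVec, dotProduct, Fin.sum_univ_seven, vec7_five, vec7_six] at h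
    rw [E5 x t, E6 x t] at h
    have hne := hΔ x t
    field_simp at h
    have h2 : (a * 8 * z x t 3 ^ 6) * (px (fun x t => z x t 4) x t - z x t 6) = 0 := by
      linear_combination (a * 8 * z x t 3 ^ 5) * h
    have h3 := (mul_eq_zero.mp h2).resolve_left
      (mul_ne_zero (mul_ne_zero (ne_of_gt ha) (by norm_num)) (pow_ne_zero 6 hne))
    linarith
  have hpp0 : ∀ x t : ℝ, px (px (fun x t => z x t 0)) x t = px (fun x t => z x t 3) x t := by
    intro x t
    have hfe : (fun y => px (fun x t => z x t 0) y t) = (fun y => z y t 3) :=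
      funext fun y => E6 y t
    show deriv (fun y => px (fun x t => z x t 0) y t) x = _
    rw [hfe]; rfl
  have hpp1 : ∀ x t : ℝ, px (px (fun x t => z x t 1)) x t = px (fun x t => z x t 4) x t := by
    intro x t
    have hfe : (fun y => px (fun x t => z x t 1) y t) = (fun y => z y t 4) :=
      funext fun y => E5 y t
    show deriv (fun y => px (fun x t => z x t 1) y t) x = _
    rw [hfe]; rfl
  refine ⟨?_, E2, ?_⟩
  · intro x t
    have hfun : (fun x t => px (px (fun x t => z x t 0)) x t / px (fun x t => z x t 0) x t)
        = fun x t => z x t 5 / z x t 3 := by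
      funext y s; rw [hpp0 y s, E4 y s, E6 y s]
    rw [hfun, hpp1 x t]
    have hq : px (fun x t => z x t 5 / z x t 3) x t
        = (px (fun x t => z x t 5) x t * z x t 3 - z x t 5 * px (fun x t => z x t 3) x t)
            / z x t 3 ^ 2 := by
      show deriv (fun y => z y t 5 / z y t 3) x = _
      rw [deriv_fun_div (hdi 5 t x) (hdi 3 t x) (hΔ x t)]; rfl
    rw [hq]
    have h := congrFun (heq x t) 1
    rw [gradH_Ham7_1 α β a (z x t) (hΔ x t)] at h
    simp [Mmat7, Kmat7, Matrix.mulVec, dotProduct, Fin.sum_univ_seven, vec7_five, vec7_six] at h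
    have hne := hΔ x t
    field_simp at h ⊢
    have h2 : (2 * z x t 3) * ((α * z x t 1 - β * px (fun x t => z x t 4) x t) * (2 * z x t 3 ^ 2)
        - (-(z x t 2 * px (fun x t => z x t 0) x t * (2 * z x t 3 ^ 2))
            + a * (px (fun x t => z x t 5) x t * z x t 3
                - z x t 5 * px (fun x t => z x t 3) x t))) = 0 := by
      linear_combination (-2 * z x t 3) * h
    have h3 := (mul_eq_zero.mp h2).resolve_left (mul_ne_zero two_ne_zero hne)
    linarith
  · intro x t
    have hfun : (fun x t => z x t 2 * z x t 1
          - (a / 2) * px (px (fun x t => z x t 1)) x t / px (fun x t => z x t 0) x t)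
        = fun x t => z x t 2 * z x t 1 - a / 2 * z x t 6 / z x t 3 := by
      funext y s; rw [hpp1 y s, E3 y s, E6 y s]
    rw [hfun]
    have hd1 : DifferentiableAt ℝ (fun y => z y t 2 * z y t 1) x := (hdi 2 t x).mul (hdi 1 t x)
    have hd2 : DifferentiableAt ℝ (fun y => a / 2 * z y t 6) x := (hdi 6 t x).const_mul _
    have hq : px (fun x t => z x t 2 * z x t 1 - a / 2 * z x t 6 / z x t 3) x t
        = (px (fun x t => z x t 2) x t * z x t 1 + z x t 2 * px (fun x t => z x t 1) x t)
          - (a / 2 * px (fun x t => z x t 6) x t * z x t 3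
              - a / 2 * z x t 6 * px (fun x t => z x t 3) x t) / z x t 3 ^ 2 := by
      show deriv (fun y => z y t 2 * z y t 1 - a / 2 * z y t 6 / z y t 3) x = _
      rw [deriv_fun_sub hd1 (hd2.fun_div (hdi 3 t x) (hΔ x t)),
        deriv_fun_mul (hdi 2 t x) (hdi 1 t x),
        deriv_fun_div hd2 (hdi 3 t x) (hΔ x t),
        deriv_const_mul _ (hdi 6 t x)]
      rfl
    rw [hq]
    have h := congrFun (heq x t) 0
    rw [gradH_Ham7_0 α β a (z x t) (hΔ x t)] at h
    simp [Mmat7, Kmat7, Matrix.mulVec, dotProduct, Fin.sum_univ_seven, vec7_five, vec7_six] at h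
    have hne := hΔ x t
    field_simp at h ⊢
    have h2 : (2 * z x t 3) * (pt (fun x t => z x t 2) x t * (2 * z x t 3 ^ 2)
        + ((px (fun x t => z x t 2) x t * z x t 1 + z x t 2 * px (fun x t => z x t 1) x t) * (2 * z x t 3 ^ 2)
          - (a * px (fun x t => z x t 6) x t * z x t 3 - a * z x t 6 * px (fun x t => z x t 3) x t))) = 0 := by
      linear_combination (2 * z x t 3) * h
    have h3 := (mul_eq_zero.mp h2).resolve_left (mul_ne_zero two_ne_zero hne)
    linarith
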